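/- Let p and q be real polynomials with deg q < deg p. If p is hyperbolic and all of its roots are simple (p has only simple real zeros), then there exists ε > 0 such that for every real b with |b| < ε, the polynomial p + b·q is hyperbolic. -/

import Mathlib

open Polynomial

/-- A real polynomial is *hyperbolic* if all of its complex roots are real
(the zero polynomial and nonzero constants are vacuously hyperbolic). -/
def Hyperbolic (p : Polynomial ℝ) : Prop :=
  ∀ z ∈ (p.map (algebraMap ℝ ℂ)).roots, z.im = 0

/-- `γ` is a multiplier sequence for the simple set `q`: the linear operator
sending `q k` to `γ k • q k` maps hyperbolic polynomials to hyperbolic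
polynomials.  (Since `q` is a simple set, every real polynomial has a unique
expansion `∑ a k • q k`, so this quantification over coefficient families
expresses exactly that property.) -/
def IsMultiplierSeqFor (q : ℕ → Polynomial ℝ) (γ : ℕ → ℝ) : Prop :=
  ∀ (n : ℕ) (a : ℕ → ℝ),
    Hyperbolic (∑ k ∈ Finset.range n, C (a k) * q k) →
    Hyperbolic (∑ k ∈ Finset.range n, C (γ k * a k) * q k)

/-!
The `n = deg p` real roots of `p` are simple, so `p` changes sign across each of them: there are
disjoint intervals `(r - δ, r + δ)` around the roots with `p (r - δ) * p (r + δ) < 0`. These finitely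
many strict sign conditions survive a small perturbation `p + b q`, so by the intermediate value
theorem `p + b q` still has a root in each interval, hence `n` distinct real roots. Since
`deg q < deg p`, `p + b q` has degree `n`, so these are all of its roots.
-/

open Filter Topology Set

theorem hyperbolic_iff_splits {p : ℝ[X]} : Hyperbolic p ↔ p.Splits := by
  refine ⟨fun hp ↦ ?_, fun hp z hz ↦ ?_⟩
  · exact Splits.of_splits_map_of_injective (algebraMap ℝ ℂ).injective (IsAlgClosed.splits _)
      fun z hz ↦ ⟨z.re, Complex.ext rfl (hp z hz).symm⟩
  · rw [hp.roots_map_of_injective (algebraMap ℝ ℂ).injective] at hz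
    obtain ⟨x, -, rfl⟩ := Multiset.mem_map.mp hz
    exact Complex.ofReal_im x

theorem exists_mem_Ioo_eq_zero_of_mul_neg {α : Type*} [ConditionallyCompleteLinearOrder α]
    [TopologicalSpace α] [OrderTopology α] [DenselyOrdered α] {f : α → ℝ} {a c : α}
    (hac : a ≤ c) (hf : ContinuousOn f (Icc a c)) (h : f a * f c < 0) :
    ∃ x ∈ Ioo a c, f x = 0 := by
  rcases mul_neg_iff.mp h with ⟨ha, hc⟩ | ⟨ha, hc⟩
  · exact intermediate_value_Ioo' hac hf ⟨hc, ha⟩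
  · exact intermediate_value_Ioo hac hf ⟨ha, hc⟩

theorem eventually_eval_sub_mul_eval_add_neg {p : ℝ[X]} {r : ℝ} (h : p.rootMultiplicity r = 1) :
    ∀ᶠ δ in 𝓝[>] 0, p.eval (r - δ) * p.eval (r + δ) < 0 := by
  have hp0 : p ≠ 0 := by rintro rfl; simp at h
  set g := p /ₘ (X - C r)
  have hfactor : (X - C r) * g = p := by
    simpa [h] using pow_mul_divByMonic_rootMultiplicity_eq p r
  have hgr : g.eval r ≠ 0 := by
    simpa [h] using eval_divByMonic_pow_rootMultiplicity_ne_zero r hp0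
  have hsign : ∀ᶠ x in 𝓝 r, 0 < g.eval x * g.eval r :=
    ((g.continuous.tendsto r).mul_const (g.eval r)).eventually_const_lt (mul_self_pos.mpr hgr)
  have hleft : Tendsto (fun δ ↦ r - δ) (𝓝[>] 0) (𝓝 r) :=
    ((continuous_const.sub continuous_id).tendsto' 0 r (sub_zero r)).mono_left nhdsWithin_le_nhds
  have hright : Tendsto (fun δ ↦ r + δ) (𝓝[>] 0) (𝓝 r) :=
    ((continuous_const.add continuous_id).tendsto' 0 r (add_zero r)).mono_left nhdsWithin_le_nhds
  -- `p (r - δ) * p (r + δ) = -δ² g (r - δ) g (r + δ)`, and `g` has the sign of `g r` near `r`.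
  filter_upwards [hleft.eventually hsign, hright.eventually hsign, self_mem_nhdsWithin]
    with δ hl hr (hδ : 0 < δ)
  have hsame : 0 < g.eval (r - δ) * g.eval (r + δ) := by
    nlinarith [mul_pos hl hr, mul_self_pos.mpr hgr]
  rw [← hfactor, eval_mul, eval_mul]
  simp only [eval_sub, eval_X, eval_C, sub_sub_cancel_left, add_sub_cancel_left]
  calc _ = -(δ * δ * (g.eval (r - δ) * g.eval (r + δ))) := by ring
    _ < 0 := neg_neg_of_pos (mul_pos (mul_pos hδ hδ) hsame)

theorem eventually_eval_add_C_mul_mul_eval_pos {p : ℝ[X]} {x : ℝ} (hx : p.eval x ≠ 0)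
    (q : ℝ[X]) : ∀ᶠ b in 𝓝 0, 0 < (p + C b * q).eval x * p.eval x := by
  have hcont : Continuous fun b : ℝ ↦ (p + C b * q).eval x * p.eval x := by
    simp only [eval_add, eval_mul, eval_C]
    fun_prop
  exact (hcont.tendsto' 0 _ (by simp)).eventually_const_lt (mul_self_pos.mpr hx)

theorem eventually_exists_mem_roots_Ioo {p : ℝ[X]} {a c : ℝ} (hac : a ≤ c)
    (h : p.eval a * p.eval c < 0) (q : ℝ[X]) :
    ∀ᶠ b in 𝓝 0, ∃ x ∈ Ioo a c, x ∈ (p + C b * q).roots := by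
  filter_upwards [eventually_eval_add_C_mul_mul_eval_pos (left_ne_zero_of_mul h.ne) q,
    eventually_eval_add_C_mul_mul_eval_pos (right_ne_zero_of_mul h.ne) q] with b ha hc
  have hne : p + C b * q ≠ 0 := fun h0 ↦ by simp [h0] at ha
  obtain ⟨x, hx, hroot⟩ :=
    exists_mem_Ioo_eq_zero_of_mul_neg hac (p + C b * q).continuousOn (by nlinarith [mul_pos ha hc])
  exact ⟨x, hx, (mem_roots hne).mpr hroot⟩

theorem eventually_two_mul_lt_dist {α : Type*} [MetricSpace α] (s : Finset α) :
    ∀ᶠ δ in 𝓝[>] (0 : ℝ), ∀ r ∈ s, ∀ r' ∈ s, r ≠ r' → 2 * δ < dist r r' := by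
  refine (eventually_all_finset s).2 fun r _ ↦ (eventually_all_finset s).2 fun r' _ ↦ ?_
  by_cases hrr' : r = r'
  · exact Eventually.of_forall fun _ hne ↦ absurd hrr' hne
  filter_upwards [nhdsWithin_le_nhds (eventually_lt_nhds (half_pos (dist_pos.2 hrr')))]
    with δ hδ _
  linarith

theorem eventually_card_roots_le_card_roots_add {p : ℝ[X]} (hp : p.roots.Nodup) (q : ℝ[X]) :
    ∀ᶠ b in 𝓝 0, Multiset.card p.roots ≤ Multiset.card (p + C b * q).roots := by
  classical
  set s := p.roots.toFinset
  have hsign : ∀ᶠ δ in 𝓝[>] 0, ∀ r ∈ s, p.eval (r - δ) * p.eval (r + δ) < 0 := by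
    refine (eventually_all_finset s).2 fun r hr ↦ eventually_eval_sub_mul_eval_add_neg ?_
    rw [← count_roots]
    exact Multiset.count_eq_one_of_mem hp (Multiset.mem_toFinset.mp hr)
  obtain ⟨δ, hδsign, hδsep, hδ⟩ :=
    (hsign.and ((eventually_two_mul_lt_dist s).and self_mem_nhdsWithin)).exists
  have hroots : ∀ᶠ b in 𝓝 0, ∀ r ∈ s, ∃ x ∈ Ioo (r - δ) (r + δ), x ∈ (p + C b * q).roots :=
    (eventually_all_finset s).2 fun r hr ↦
      eventually_exists_mem_roots_Ioo (by linarith) (hδsign r hr) q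
  filter_upwards [hroots] with b hb
  choose! x hxI hxroot using hb
  have hinj : InjOn x s := by
    intro r hr r' hr' hxx
    by_contra hne
    have hr := hxI r hr
    have hr' := hxI r' hr'
    rw [← Real.ball_eq_Ioo, hxx] at hr
    rw [← Real.ball_eq_Ioo] at hr'
    linarith [hδsep r ‹_› r' ‹_› hne, dist_triangle_left r r' (x r'), Metric.mem_ball.mp hr,
      Metric.mem_ball.mp hr']
  calc Multiset.card p.roots = s.card := (Multiset.toFinset_card_of_nodup hp).symm
    _ ≤ (p + C b * q).roots.toFinset.card :=
      Finset.card_le_card_of_injOn x (fun r hr ↦ Multiset.mem_toFinset.mpr (hxroot r hr)) hinj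
    _ ≤ Multiset.card (p + C b * q).roots := Multiset.toFinset_card_le _

theorem eventually_hyperbolic_add_C_mul {p q : ℝ[X]} (hdeg : q.degree < p.degree)
    (hp : Hyperbolic p) (hsimple : p.roots.Nodup) :
    ∀ᶠ b in 𝓝 0, Hyperbolic (p + C b * q) := by
  have hcard := splits_iff_card_roots.mp (hyperbolic_iff_splits.mp hp)
  filter_upwards [eventually_card_roots_le_card_roots_add hsimple q] with b hb
  have hdegree : (p + C b * q).natDegree = p.natDegree :=
    natDegree_add_eq_left_of_degree_lt ((smul_eq_C_mul b ▸ degree_smul_le b q).trans_lt hdeg)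
  refine hyperbolic_iff_splits.mpr (splits_iff_card_roots.mpr (le_antisymm (card_roots' _) ?_))
  rwa [hdegree, ← hcard]

theorem stmt_4 (p q : Polynomial ℝ) (hdeg : q.degree < p.degree)
    (hp : Hyperbolic p) (hsimple : (p.map (algebraMap ℝ ℂ)).roots.Nodup) :
    ∃ ε > (0 : ℝ), ∀ b : ℝ, |b| < ε → Hyperbolic (p + C b * q) := by
  rw [(hyperbolic_iff_splits.mp hp).roots_map_of_injective (algebraMap ℝ ℂ).injective] at hsimple
  obtain ⟨ε, hε, h⟩ :=
    Metric.eventually_nhds_iff.mp (eventually_hyperbolic_add_C_mul hdeg hp (hsimple.of_map _))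
  exact ⟨ε, hε, fun b hb ↦ h (by rwa [Real.dist_0_eq_abs])⟩
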